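/- Let N ≥ 4, let U and V be disjoint sets with |U| = |V| = N, and fix distinct vertices u₁, u₂ ∈ U and distinct vertices v₁, v₂ ∈ V. Let H be the graph on U ∪ V whose edge set consists of all pairs {u,v} with u ∈ U, v ∈ V except the two pairs {u₁,v₂} and {u₂,v₁}, together with the two pairs {u₁,u₂} and {v₁,v₂}. Then every vertex of H has degree exactly N, and the number of induced diamonds in H is exactly 2·binom(N−2, 2); specifically, the induced diamonds of H are precisely the sets {u₁,u₂,v,v′} with v, v′ distinct vertices of V \ {v₁,v₂}, and the sets {v₁,v₂,u,u′} with u, u′ distinct vertices of U \ {u₁,u₂}. -/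
import Mathlib


/-- An induced diamond in `H`: four distinct vertices `a, b, c, d` such that all pairs
among them are edges of `H` except exactly the pair `{c, d}`. -/
def IsDiamond {X : Type*} (H : SimpleGraph X) (a b c d : X) : Prop :=
  a ≠ b ∧ a ≠ c ∧ a ≠ d ∧ b ≠ c ∧ b ≠ d ∧ c ≠ d ∧
    H.Adj a b ∧ H.Adj a c ∧ H.Adj a d ∧ H.Adj b c ∧ H.Adj b d ∧ ¬ H.Adj c d

/-- `{x, y}` equals the unordered pair `{a, b}`. -/
def pairEq {X : Type*} (x y a b : X) : Prop :=
  (x = a ∧ y = b) ∨ (x = b ∧ y = a)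

theorem stmt16aux {X : Type*} [Fintype X] [DecidableEq X]
    (N : ℕ) (hN : 4 ≤ N)
    (U V : Finset X) (hdisj : Disjoint U V) (hcover : U ∪ V = Finset.univ)
    (hV : V.card = N)
    (u₁ u₂ : X) (hu₁ : u₁ ∈ U) (hu₂ : u₂ ∈ U) (hu : u₁ ≠ u₂)
    (v₁ v₂ : X) (hv₁ : v₁ ∈ V) (hv₂ : v₂ ∈ V) (hv : v₁ ≠ v₂)
    (H : SimpleGraph X) [DecidableRel H.Adj]
    (hadj : ∀ x y, H.Adj x y ↔
      ((((x ∈ U ∧ y ∈ V) ∨ (x ∈ V ∧ y ∈ U)) ∧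
          ¬ pairEq x y u₁ v₂ ∧ ¬ pairEq x y u₂ v₁) ∨
        pairEq x y u₁ u₂ ∨ pairEq x y v₁ v₂)) :
    (∀ x ∈ U, H.degree x = N) ∧
    (∀ a b c d, IsDiamond H a b c d → c ∈ U → d ∈ U →
      ∃ u u', u ∈ U \ {u₁, u₂} ∧ u' ∈ U \ {u₁, u₂} ∧ u ≠ u' ∧
        ({a, b, c, d} : Finset X) = {v₁, v₂, u, u'}) ∧
    (∀ a b c d, IsDiamond H a b c d → c ∈ U → d ∈ V → False) ∧
    (∀ u u', u ∈ U \ {u₁, u₂} → u' ∈ U \ {u₁, u₂} → u ≠ u' →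
      IsDiamond H v₁ v₂ u u') := by
  have nUV : ∀ z ∈ U, z ∉ V := fun z hz => Finset.disjoint_left.mp hdisj hz
  have nVU : ∀ z ∈ V, z ∉ U := fun z hz => Finset.disjoint_right.mp hdisj hz
  have cover : ∀ x : X, x ∈ U ∨ x ∈ V := fun x =>
    Finset.mem_union.mp (hcover.symm ▸ Finset.mem_univ x)
  have adjUV : ∀ x y, x ∈ U → y ∈ V →
      (H.Adj x y ↔ ¬(x = u₁ ∧ y = v₂) ∧ ¬(x = u₂ ∧ y = v₁)) := by
    intro x y hx hy
    rw [hadj]; unfold pairEq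
    constructor
    · rintro (⟨_, h1, h2⟩ | (⟨rfl, rfl⟩ | ⟨rfl, rfl⟩) | (⟨rfl, rfl⟩ | ⟨rfl, rfl⟩))
      · exact ⟨fun h => h1 (Or.inl h), fun h => h2 (Or.inl h)⟩
      · exact absurd hy (nUV _ hu₂)
      · exact absurd hy (nUV _ hu₁)
      · exact absurd hx (nVU _ hv₁)
      · exact absurd hx (nVU _ hv₂)
    · rintro ⟨h1, h2⟩
      refine Or.inl ⟨Or.inl ⟨hx, hy⟩, ?_, ?_⟩
      · rintro (h | ⟨rfl, rfl⟩)
        · exact h1 h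
        · exact nVU _ hv₂ hx
      · rintro (h | ⟨rfl, rfl⟩)
        · exact h2 h
        · exact nVU _ hv₁ hx
  have adjUU : ∀ x y, x ∈ U → y ∈ U →
      (H.Adj x y ↔ (x = u₁ ∧ y = u₂) ∨ (x = u₂ ∧ y = u₁)) := by
    intro x y hx hy
    rw [hadj]; unfold pairEq
    constructor
    · rintro (⟨(⟨_, hy'⟩ | ⟨hx', _⟩), _, _⟩ | h | (⟨rfl, _⟩ | ⟨rfl, _⟩))
      · exact absurd hy' (nUV _ hy)
      · exact absurd hx' (nUV _ hx)
      · exact h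
      · exact absurd hx (nVU _ hv₁)
      · exact absurd hx (nVU _ hv₂)
    · intro h; exact Or.inr (Or.inl h)
  have adjVV : ∀ x y, x ∈ V → y ∈ V →
      (H.Adj x y ↔ (x = v₁ ∧ y = v₂) ∨ (x = v₂ ∧ y = v₁)) := by
    intro x y hx hy
    rw [hadj]; unfold pairEq
    constructor
    · rintro (⟨(⟨hx', _⟩ | ⟨_, hy'⟩), _, _⟩ | (⟨rfl, _⟩ | ⟨rfl, _⟩) | h)
      · exact absurd hx' (nVU _ hx)
      · exact absurd hy' (nVU _ hy)
      · exact absurd hx (nUV _ hu₁)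
      · exact absurd hx (nUV _ hu₂)
      · exact h
    · intro h; exact Or.inr (Or.inr h)
  refine ⟨?_, ?_, ?_, ?_⟩
  · -- degrees
    intro x hx
    have hdeg : H.degree x = (H.neighborFinset x).card := rfl
    by_cases hx1 : x = u₁
    · subst hx1
      have hns : H.neighborFinset x = insert u₂ (V.erase v₂) := by
        ext y
        rw [SimpleGraph.mem_neighborFinset, Finset.mem_insert, Finset.mem_erase]
        constructor
        · intro h
          rcases cover y with hyU | hyV
          · rcases (adjUU x y hx hyU).mp h with ⟨_, h2⟩ | ⟨h1, _⟩
            · exact Or.inl h2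
            · exact absurd h1 hu
          · exact Or.inr ⟨fun hy2 => ((adjUV x y hx hyV).mp h).1 ⟨rfl, hy2⟩, hyV⟩
        · rintro (rfl | ⟨hne, hyV⟩)
          · exact (adjUU x y hx hu₂).mpr (Or.inl ⟨rfl, rfl⟩)
          · exact (adjUV x y hx hyV).mpr ⟨fun h => hne h.2, fun h => hu h.1⟩
      rw [hdeg, hns, Finset.card_insert_of_notMem
        (fun hm => nUV _ hu₂ (Finset.mem_of_mem_erase hm)),
        Finset.card_erase_of_mem hv₂, hV]
      omega
    · by_cases hx2 : x = u₂
      · subst hx2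
        have hns : H.neighborFinset x = insert u₁ (V.erase v₁) := by
          ext y
          rw [SimpleGraph.mem_neighborFinset, Finset.mem_insert, Finset.mem_erase]
          constructor
          · intro h
            rcases cover y with hyU | hyV
            · rcases (adjUU x y hx hyU).mp h with ⟨h1, _⟩ | ⟨_, h2⟩
              · exact absurd h1 (Ne.symm hu)
              · exact Or.inl h2
            · exact Or.inr ⟨fun hy2 => ((adjUV x y hx hyV).mp h).2 ⟨rfl, hy2⟩, hyV⟩
          · rintro (rfl | ⟨hne, hyV⟩)
            · exact (adjUU x y hx hu₁).mpr (Or.inr ⟨rfl, rfl⟩)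
            · exact (adjUV x y hx hyV).mpr ⟨fun h => hu.symm h.1, fun h => hne h.2⟩
        rw [hdeg, hns, Finset.card_insert_of_notMem
          (fun hm => nUV _ hu₁ (Finset.mem_of_mem_erase hm)),
          Finset.card_erase_of_mem hv₁, hV]
        omega
      · have hns : H.neighborFinset x = V := by
          ext y
          rw [SimpleGraph.mem_neighborFinset]
          constructor
          · intro h
            rcases cover y with hyU | hyV
            · rcases (adjUU x y hx hyU).mp h with ⟨h1, _⟩ | ⟨h1, _⟩
              · exact absurd h1 hx1
              · exact absurd h1 hx2
            · exact hyV
          · intro hyV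
            exact (adjUV x y hx hyV).mpr ⟨fun h => hx1 h.1, fun h => hx2 h.1⟩
        rw [hdeg, hns, hV]
  · -- diamonds with nonedge inside U
    intro a b c d hD hc hd
    obtain ⟨hab, hac, had, hbc, hbd, hcd, Aab, Aac, Aad, Abc, Abd, nAcd⟩ := hD
    have haV : a ∈ V := by
      rcases cover a with haU | haV
      · rcases (adjUU a c haU hc).mp Aac with ⟨ha1, hc2⟩ | ⟨ha2, hc1⟩ <;>
          rcases (adjUU a d haU hd).mp Aad with ⟨ha1', hd2⟩ | ⟨ha2', hd1⟩
        · exact absurd (hc2.trans hd2.symm) hcd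
        · exact absurd (ha1.symm.trans ha2') hu
        · exact absurd (ha2.symm.trans ha1') hu.symm
        · exact absurd (hc1.trans hd1.symm) hcd
      · exact haV
    have hbV : b ∈ V := by
      rcases cover b with hbU | hbV
      · rcases (adjUU b c hbU hc).mp Abc with ⟨hb1, hc2⟩ | ⟨hb2, hc1⟩ <;>
          rcases (adjUU b d hbU hd).mp Abd with ⟨hb1', hd2⟩ | ⟨hb2', hd1⟩
        · exact absurd (hc2.trans hd2.symm) hcd
        · exact absurd (hb1.symm.trans hb2') hu
        · exact absurd (hb2.symm.trans hb1') hu.symm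
        · exact absurd (hc1.trans hd1.symm) hcd
      · exact hbV
    have hcmem : ∀ z, z ∈ U → H.Adj v₁ z → H.Adj v₂ z → z ∈ U \ {u₁, u₂} := by
      intro z hz h1 h2
      rw [Finset.mem_sdiff, Finset.mem_insert, Finset.mem_singleton]
      refine ⟨hz, ?_⟩
      rintro (rfl | rfl)
      · exact ((adjUV z v₂ hz hv₂).mp h2.symm).1 ⟨rfl, rfl⟩
      · exact ((adjUV z v₁ hz hv₁).mp h1.symm).2 ⟨rfl, rfl⟩
    rcases (adjVV a b haV hbV).mp Aab with ⟨ha1, hb2⟩ | ⟨ha2, hb1⟩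
    · subst ha1; subst hb2
      exact ⟨c, d, hcmem c hc Aac Abc, hcmem d hd Aad Abd, hcd, rfl⟩
    · subst ha2; subst hb1
      exact ⟨c, d, hcmem c hc Abc Aac, hcmem d hd Abd Aad, hcd,
        Finset.insert_comm _ _ _⟩
  · -- no diamond with nonedge crossing
    intro a b c d hD hc hd
    obtain ⟨hab, hac, had, hbc, hbd, hcd, Aab, Aac, Aad, Abc, Abd, nAcd⟩ := hD
    have hp : (c = u₁ ∧ d = v₂) ∨ (c = u₂ ∧ d = v₁) := by
      by_contra h
      exact nAcd ((adjUV c d hc hd).mpr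
        ⟨fun hx => h (Or.inl hx), fun hx => h (Or.inr hx)⟩)
    have key : ∀ z, H.Adj z c → H.Adj z d →
        ((c = u₁ ∧ d = v₂) → (z = u₂ ∨ z = v₁)) ∧
        ((c = u₂ ∧ d = v₁) → (z = u₁ ∨ z = v₂)) := by
      intro z hzc hzd
      constructor
      · rintro ⟨hc1, hd2⟩
        rcases cover z with hzU | hzV
        · rcases (adjUU z c hzU hc).mp hzc with ⟨_, h2⟩ | ⟨h1, _⟩
          · exact absurd (hc1.symm.trans h2) hu
          · exact Or.inl h1
        · rcases (adjVV z d hzV hd).mp hzd with ⟨h1, _⟩ | ⟨_, h2⟩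
          · exact Or.inr h1
          · exact absurd (h2.symm.trans hd2) hv
      · rintro ⟨hc2, hd1⟩
        rcases cover z with hzU | hzV
        · rcases (adjUU z c hzU hc).mp hzc with ⟨h1, _⟩ | ⟨_, h2⟩
          · exact Or.inl h1
          · exact absurd (h2.symm.trans hc2) hu
        · rcases (adjVV z d hzV hd).mp hzd with ⟨_, h2⟩ | ⟨h1, _⟩
          · exact absurd (hd1.symm.trans h2) hv
          · exact Or.inr h1
    rcases hp with hp | hp
    · rcases (key a Aac Aad).1 hp with ha | ha <;>
        rcases (key b Abc Abd).1 hp with hb | hb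
      · exact hab (ha.trans hb.symm)
      · subst ha; subst hb
        exact ((adjUV a b hu₂ hv₁).mp Aab).2 ⟨rfl, rfl⟩
      · subst ha; subst hb
        exact ((adjUV b a hu₂ hv₁).mp Aab.symm).2 ⟨rfl, rfl⟩
      · exact hab (ha.trans hb.symm)
    · rcases (key a Aac Aad).2 hp with ha | ha <;>
        rcases (key b Abc Abd).2 hp with hb | hb
      · exact hab (ha.trans hb.symm)
      · subst ha; subst hb
        exact ((adjUV a b hu₁ hv₂).mp Aab).1 ⟨rfl, rfl⟩
      · subst ha; subst hb
        exact ((adjUV b a hu₁ hv₂).mp Aab.symm).1 ⟨rfl, rfl⟩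
      · exact hab (ha.trans hb.symm)
  · -- converse: these are diamonds
    intro u u' hmu hmu' hne
    rw [Finset.mem_sdiff, Finset.mem_insert, Finset.mem_singleton] at hmu hmu'
    obtain ⟨huU, hn⟩ := hmu
    obtain ⟨huU', hn'⟩ := hmu'
    have hn1 : u ≠ u₁ := fun h => hn (Or.inl h)
    have hn2 : u ≠ u₂ := fun h => hn (Or.inr h)
    have hn1' : u' ≠ u₁ := fun h => hn' (Or.inl h)
    have hn2' : u' ≠ u₂ := fun h => hn' (Or.inr h)
    refine ⟨hv, ?_, ?_, ?_, ?_, hne, ?_, ?_, ?_, ?_, ?_, ?_⟩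
    · rintro rfl; exact nVU _ hv₁ huU
    · rintro rfl; exact nVU _ hv₁ huU'
    · rintro rfl; exact nVU _ hv₂ huU
    · rintro rfl; exact nVU _ hv₂ huU'
    · exact (adjVV v₁ v₂ hv₁ hv₂).mpr (Or.inl ⟨rfl, rfl⟩)
    · exact ((adjUV u v₁ huU hv₁).mpr ⟨fun h => hv h.2, fun h => hn2 h.1⟩).symm
    · exact ((adjUV u' v₁ huU' hv₁).mpr ⟨fun h => hv h.2, fun h => hn2' h.1⟩).symm
    · exact ((adjUV u v₂ huU hv₂).mpr ⟨fun h => hn1 h.1, fun h => hv h.2.symm⟩).symm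
    · exact ((adjUV u' v₂ huU' hv₂).mpr ⟨fun h => hn1' h.1, fun h => hv h.2.symm⟩).symm
    · intro h
      rcases (adjUU u u' huU huU').mp h with ⟨h1, _⟩ | ⟨h1, _⟩
      · exact hn1 h1
      · exact hn2 h1

open Classical in
/-- The biclique with removed crossing pairs `{u₁,v₂}`, `{u₂,v₁}` and added pairs
`{u₁,u₂}`, `{v₁,v₂}`: every vertex has degree `N`, and the induced diamonds are
precisely the sets `{u₁,u₂,v,v′}` with `v ≠ v′` in `V \ {v₁,v₂}` and `{v₁,v₂,u,u′}`
with `u ≠ u′` in `U \ {u₁,u₂}`; there are exactly `2·binom(N-2,2)` of them. -/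
theorem stmt16 {X : Type*} [Fintype X] [DecidableEq X]
    (N : ℕ) (hN : 4 ≤ N)
    (U V : Finset X) (hdisj : Disjoint U V) (hcover : U ∪ V = Finset.univ)
    (hU : U.card = N) (hV : V.card = N)
    (u₁ u₂ : X) (hu₁ : u₁ ∈ U) (hu₂ : u₂ ∈ U) (hu : u₁ ≠ u₂)
    (v₁ v₂ : X) (hv₁ : v₁ ∈ V) (hv₂ : v₂ ∈ V) (hv : v₁ ≠ v₂)
    (H : SimpleGraph X) [DecidableRel H.Adj]
    (hadj : ∀ x y, H.Adj x y ↔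
      ((((x ∈ U ∧ y ∈ V) ∨ (x ∈ V ∧ y ∈ U)) ∧
          ¬ pairEq x y u₁ v₂ ∧ ¬ pairEq x y u₂ v₁) ∨
        pairEq x y u₁ u₂ ∨ pairEq x y v₁ v₂)) :
    (∀ x, H.degree x = N) ∧
    (∀ s : Finset X,
      (∃ a b c d, s = {a, b, c, d} ∧ IsDiamond H a b c d) ↔
        ((∃ v v', v ∈ V \ {v₁, v₂} ∧ v' ∈ V \ {v₁, v₂} ∧ v ≠ v' ∧
            s = {u₁, u₂, v, v'}) ∨
          (∃ u u', u ∈ U \ {u₁, u₂} ∧ u' ∈ U \ {u₁, u₂} ∧ u ≠ u' ∧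
            s = {v₁, v₂, u, u'}))) ∧
    ((Finset.univ.powersetCard 4).filter
        (fun s : Finset X => ∃ a b c d, s = {a, b, c, d} ∧ IsDiamond H a b c d)).card
      = 2 * (N - 2).choose 2 := by
  obtain ⟨deg1, diaUU, cross1, back1⟩ :=
    stmt16aux N hN U V hdisj hcover hV u₁ u₂ hu₁ hu₂ hu v₁ v₂ hv₁ hv₂ hv H hadj
  obtain ⟨deg2, diaVV, cross2, back2⟩ :=
    stmt16aux N hN V U hdisj.symm (by rw [Finset.union_comm]; exact hcover) hU
      v₁ v₂ hv₁ hv₂ hv u₁ u₂ hu₁ hu₂ hu H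
      (by
        intro x y
        rw [hadj x y]
        unfold pairEq
        constructor
        · rintro (⟨hm, h1, h2⟩ | h | h)
          · exact Or.inl ⟨hm.symm, fun hp => h2 hp.symm, fun hp => h1 hp.symm⟩
          · exact Or.inr (Or.inr h)
          · exact Or.inr (Or.inl h)
        · rintro (⟨hm, h1, h2⟩ | h | h)
          · exact Or.inl ⟨hm.symm, fun hp => h2 hp.symm, fun hp => h1 hp.symm⟩
          · exact Or.inr (Or.inr h)
          · exact Or.inr (Or.inl h))
  have cover : ∀ x : X, x ∈ U ∨ x ∈ V := fun x =>
    Finset.mem_union.mp (hcover.symm ▸ Finset.mem_univ x)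
  have char : ∀ s : Finset X,
      (∃ a b c d, s = {a, b, c, d} ∧ IsDiamond H a b c d) ↔
        ((∃ v v', v ∈ V \ {v₁, v₂} ∧ v' ∈ V \ {v₁, v₂} ∧ v ≠ v' ∧
            s = {u₁, u₂, v, v'}) ∨
          (∃ u u', u ∈ U \ {u₁, u₂} ∧ u' ∈ U \ {u₁, u₂} ∧ u ≠ u' ∧
            s = {v₁, v₂, u, u'})) := by
    intro s
    constructor
    · rintro ⟨a, b, c, d, rfl, hD⟩
      rcases cover c with hc | hc <;> rcases cover d with hd | hd
      · exact Or.inr (diaUU a b c d hD hc hd)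
      · exact (cross1 a b c d hD hc hd).elim
      · exact (cross2 a b c d hD hc hd).elim
      · exact Or.inl (diaVV a b c d hD hc hd)
    · rintro (⟨v, v', hm, hm', hne, rfl⟩ | ⟨u, u', hm, hm', hne, rfl⟩)
      · exact ⟨u₁, u₂, v, v', rfl, back2 v v' hm hm' hne⟩
      · exact ⟨v₁, v₂, u, u', rfl, back1 u u' hm hm' hne⟩
  refine ⟨fun x => (cover x).elim (deg1 x) (deg2 x), char, ?_⟩
  -- counting
  have card4 : ∀ p q r t : X, p ≠ q → p ≠ r → p ≠ t → q ≠ r → q ≠ t → r ≠ t →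
      ({p, q, r, t} : Finset X).card = 4 := by
    intro p q r t h1 h2 h3 h4 h5 h6
    rw [Finset.card_insert_of_notMem (by simp [h1, h2, h3]),
      Finset.card_insert_of_notMem (by simp [h4, h5]),
      Finset.card_insert_of_notMem (by simp [h6]), Finset.card_singleton]
  have hun : ∀ p q r t : X, ({p, q} : Finset X) ∪ {r, t} = {p, q, r, t} := by
    intro p q r t; ext z
    simp only [Finset.mem_union, Finset.mem_insert, Finset.mem_singleton]
    tauto
  have nUV : ∀ z ∈ U, z ∉ V := fun z hz => Finset.disjoint_left.mp hdisj hz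
  have nVU : ∀ z ∈ V, z ∉ U := fun z hz => Finset.disjoint_right.mp hdisj hz
  set D1 : Finset (Finset X) :=
    ((V \ {v₁, v₂}).powersetCard 2).image (fun t => ({u₁, u₂} : Finset X) ∪ t) with hD1
  set D2 : Finset (Finset X) :=
    ((U \ {u₁, u₂}).powersetCard 2).image (fun t => ({v₁, v₂} : Finset X) ∪ t) with hD2
  have hset : ((Finset.univ.powersetCard 4).filter
      (fun s : Finset X => ∃ a b c d, s = {a, b, c, d} ∧ IsDiamond H a b c d))
      = D1 ∪ D2 := by
    ext s
    rw [Finset.mem_filter, Finset.mem_powersetCard, Finset.mem_union, char s]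
    constructor
    · rintro ⟨-, (⟨v, v', hm, hm', hne, rfl⟩ | ⟨u, u', hm, hm', hne, rfl⟩)⟩
      · left
        rw [hD1, Finset.mem_image]
        refine ⟨{v, v'}, Finset.mem_powersetCard.mpr ⟨?_, ?_⟩, hun _ _ _ _⟩
        · intro z hz
          rcases Finset.mem_insert.mp hz with rfl | hz
          · exact hm
          · exact (Finset.mem_singleton.mp hz) ▸ hm'
        · rw [Finset.card_insert_of_notMem (Finset.notMem_singleton.mpr hne),
            Finset.card_singleton]
      · right
        rw [hD2, Finset.mem_image]
        refine ⟨{u, u'}, Finset.mem_powersetCard.mpr ⟨?_, ?_⟩, hun _ _ _ _⟩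
        · intro z hz
          rcases Finset.mem_insert.mp hz with rfl | hz
          · exact hm
          · exact (Finset.mem_singleton.mp hz) ▸ hm'
        · rw [Finset.card_insert_of_notMem (Finset.notMem_singleton.mpr hne),
            Finset.card_singleton]
    · intro hmem
      rcases hmem with hmem | hmem
      · rw [hD1, Finset.mem_image] at hmem
        obtain ⟨t, ht, rfl⟩ := hmem
        obtain ⟨hsub, hc2⟩ := Finset.mem_powersetCard.mp ht
        obtain ⟨v, v', hne, rfl⟩ := Finset.card_eq_two.mp hc2
        have hmv : v ∈ V \ {v₁, v₂} := hsub (Finset.mem_insert_self _ _)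
        have hmv' : v' ∈ V \ {v₁, v₂} :=
          hsub (Finset.mem_insert_of_mem (Finset.mem_singleton_self _))
        have hvV : v ∈ V := (Finset.mem_sdiff.mp hmv).1
        have hvV' : v' ∈ V := (Finset.mem_sdiff.mp hmv').1
        rw [hun]
        refine ⟨⟨Finset.subset_univ _, card4 _ _ _ _ hu
          (fun h => nUV _ hu₁ (h ▸ hvV)) (fun h => nUV _ hu₁ (h ▸ hvV'))
          (fun h => nUV _ hu₂ (h ▸ hvV)) (fun h => nUV _ hu₂ (h ▸ hvV')) hne⟩, ?_⟩
        exact Or.inl ⟨v, v', hmv, hmv', hne, rfl⟩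
      · rw [hD2, Finset.mem_image] at hmem
        obtain ⟨t, ht, rfl⟩ := hmem
        obtain ⟨hsub, hc2⟩ := Finset.mem_powersetCard.mp ht
        obtain ⟨u, u', hne, rfl⟩ := Finset.card_eq_two.mp hc2
        have hmu : u ∈ U \ {u₁, u₂} := hsub (Finset.mem_insert_self _ _)
        have hmu' : u' ∈ U \ {u₁, u₂} :=
          hsub (Finset.mem_insert_of_mem (Finset.mem_singleton_self _))
        have huU : u ∈ U := (Finset.mem_sdiff.mp hmu).1
        have huU' : u' ∈ U := (Finset.mem_sdiff.mp hmu').1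
        rw [hun]
        refine ⟨⟨Finset.subset_univ _, card4 _ _ _ _ hv
          (fun h => nVU _ hv₁ (h ▸ huU)) (fun h => nVU _ hv₁ (h ▸ huU'))
          (fun h => nVU _ hv₂ (h ▸ huU)) (fun h => nVU _ hv₂ (h ▸ huU')) hne⟩, ?_⟩
        exact Or.inr ⟨u, u', hmu, hmu', hne, rfl⟩
  rw [hset]
  have hdisjD : Disjoint D1 D2 := by
    rw [Finset.disjoint_left]
    intro s hs1 hs2
    rw [hD1, Finset.mem_image] at hs1
    rw [hD2, Finset.mem_image] at hs2
    obtain ⟨t, ht, rfl⟩ := hs1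
    obtain ⟨t', ht', heq⟩ := hs2
    have hu1 : u₁ ∈ ({v₁, v₂} : Finset X) ∪ t' := by
      rw [heq]
      exact Finset.mem_union_left _ (Finset.mem_insert_self _ _)
    rcases Finset.mem_union.mp hu1 with h | h
    · rcases Finset.mem_insert.mp h with h | h
      · exact nUV _ hu₁ (h ▸ hv₁)
      · exact nUV _ hu₁ ((Finset.mem_singleton.mp h) ▸ hv₂)
    · have := (Finset.mem_powersetCard.mp ht').1 h
      rw [Finset.mem_sdiff] at this
      exact this.2 (Finset.mem_insert_self _ _)
  have hinj : ∀ (W : Finset X) (p q : X), p ∈ U → q ∈ U →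
      Set.InjOn (fun t => ({p, q} : Finset X) ∪ t) ((W \ {v₁, v₂}).powersetCard 2 : Finset (Finset X)) →
      True := fun _ _ _ _ _ _ => trivial
  have hinj1 : Set.InjOn (fun t => ({u₁, u₂} : Finset X) ∪ t)
      ((V \ {v₁, v₂}).powersetCard 2 : Finset (Finset X)) := by
    intro t1 h1 t2 h2 heq
    have hdd : ∀ t : Finset X, t ∈ ((V \ {v₁, v₂}).powersetCard 2 : Finset (Finset X)) →
        Disjoint ({u₁, u₂} : Finset X) t := by
      intro t ht
      rw [Finset.disjoint_left]
      intro z hz hzt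
      have hzV : z ∈ V := (Finset.mem_sdiff.mp ((Finset.mem_powersetCard.mp ht).1 hzt)).1
      rcases Finset.mem_insert.mp hz with rfl | hz
      · exact nUV _ hu₁ hzV
      · exact nUV _ hu₂ ((Finset.mem_singleton.mp hz) ▸ hzV)
    have e1 : (({u₁, u₂} : Finset X) ∪ t1) \ {u₁, u₂} = t1 :=
      Finset.union_sdiff_cancel_left (hdd t1 h1)
    have e2 : (({u₁, u₂} : Finset X) ∪ t2) \ {u₁, u₂} = t2 :=
      Finset.union_sdiff_cancel_left (hdd t2 h2)
    rw [← e1, ← e2]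
    exact congrArg (· \ {u₁, u₂}) heq
  have hinj2 : Set.InjOn (fun t => ({v₁, v₂} : Finset X) ∪ t)
      ((U \ {u₁, u₂}).powersetCard 2 : Finset (Finset X)) := by
    intro t1 h1 t2 h2 heq
    have hdd : ∀ t : Finset X, t ∈ ((U \ {u₁, u₂}).powersetCard 2 : Finset (Finset X)) →
        Disjoint ({v₁, v₂} : Finset X) t := by
      intro t ht
      rw [Finset.disjoint_left]
      intro z hz hzt
      have hzU : z ∈ U := (Finset.mem_sdiff.mp ((Finset.mem_powersetCard.mp ht).1 hzt)).1
      rcases Finset.mem_insert.mp hz with rfl | hz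
      · exact nVU _ hv₁ hzU
      · exact nVU _ hv₂ ((Finset.mem_singleton.mp hz) ▸ hzU)
    have e1 : (({v₁, v₂} : Finset X) ∪ t1) \ {v₁, v₂} = t1 :=
      Finset.union_sdiff_cancel_left (hdd t1 h1)
    have e2 : (({v₁, v₂} : Finset X) ∪ t2) \ {v₁, v₂} = t2 :=
      Finset.union_sdiff_cancel_left (hdd t2 h2)
    rw [← e1, ← e2]
    exact congrArg (· \ {v₁, v₂}) heq
  have cV : (V \ {v₁, v₂}).card = N - 2 := by
    rw [Finset.card_sdiff_of_subset (by
      intro z hz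
      rcases Finset.mem_insert.mp hz with rfl | hz
      · exact hv₁
      · exact (Finset.mem_singleton.mp hz) ▸ hv₂)]
    rw [Finset.card_insert_of_notMem (Finset.notMem_singleton.mpr hv),
      Finset.card_singleton, hV]
  have cU : (U \ {u₁, u₂}).card = N - 2 := by
    rw [Finset.card_sdiff_of_subset (by
      intro z hz
      rcases Finset.mem_insert.mp hz with rfl | hz
      · exact hu₁
      · exact (Finset.mem_singleton.mp hz) ▸ hu₂)]
    rw [Finset.card_insert_of_notMem (Finset.notMem_singleton.mpr hu),
      Finset.card_singleton, hU]
  rw [Finset.card_union_of_disjoint hdisjD, hD1, hD2,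
    Finset.card_image_of_injOn hinj1, Finset.card_image_of_injOn hinj2,
    Finset.card_powersetCard, Finset.card_powersetCard, cV, cU]
  omega
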